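/- arXiv:2204.00766 — 13 statements merged into one kernel-verified Lean document; each statement's English description precedes it below -/
import Mathlib

section
/- Let ≺ be a locally invariant partial ordering of a group G. For f ∈ G define P_f = { g ∈ G : f ≺ g*f }. Then (1) P_f ∪ P_f⁻¹ = G \ {1} for all f ∈ G, and (2) for all f,g,h ∈ G, if g ∈ P_f and h ∈ P_{g*f}, then h*g ∈ P_f. -/
/-- From a locally invariant partial ordering `≺` of `G`, the family
`P_f = {g | f ≺ g*f}` is an equivariant field of cones. -/
theorem stmt1 {G : Type*} [Group G] (r : G → G → Prop)
    (hirr : ∀ g : G, ¬ r g g)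
    (htrans : ∀ a b c : G, r a b → r b c → r a c)
    (hli : ∀ g h : G, h ≠ 1 → r g (h * g) ∨ r g (h⁻¹ * g))
    (P : G → Set G) (hP : ∀ f : G, P f = {g : G | r f (g * f)}) :
    (∀ f : G, P f ∪ (P f)⁻¹ = {(1 : G)}ᶜ) ∧
    (∀ f g h : G, g ∈ P f → h ∈ P (g * f) → h * g ∈ P f) := by
  constructor
  · intro f
    ext g
    simp only [hP, Set.mem_union, Set.mem_inv, Set.mem_setOf_eq, Set.mem_compl_iff,
      Set.mem_singleton_iff]
    constructor
    · rintro (h | h) rfl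
      · exact hirr f (by simpa using h)
      · exact hirr f (by simpa using h)
    · intro hg
      exact hli f g hg
  · intro f g h hg hh
    rw [hP] at *
    simp only [Set.mem_setOf_eq] at *
    rw [mul_assoc]
    exact htrans _ _ _ hg (by simpa [mul_assoc] using hh)
end

section
/- Let G be a group and (P_f)_{f∈G} a family of subsets of G satisfying: (1) P_f ∪ P_f⁻¹ = G \ {1} for all f, and (2) if g ∈ P_f and h ∈ P_{g*f} then h*g ∈ P_f. Then the relation defined by f ≺ g iff g*f⁻¹ ∈ P_f is a locally invariant partial ordering of G: it is irreflexive, transitive, and for all g,h ∈ G with h ≠ 1, either g ≺ hg or g ≺ h⁻¹g. -/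
/-- From an equivariant field of cones `(P_f)`, the relation
`f ≺ g ↔ g * f⁻¹ ∈ P f` is a locally invariant partial ordering of `G`. -/
theorem stmt2 {G : Type*} [Group G] (P : G → Set G)
    (h1 : ∀ f : G, P f ∪ (P f)⁻¹ = {(1 : G)}ᶜ)
    (h2 : ∀ f g h : G, g ∈ P f → h ∈ P (g * f) → h * g ∈ P f) :
    (∀ f : G, f * f⁻¹ ∉ P f) ∧
    (∀ a b c : G, b * a⁻¹ ∈ P a → c * b⁻¹ ∈ P b → c * a⁻¹ ∈ P a) ∧
    (∀ g h : G, h ≠ 1 → (h * g) * g⁻¹ ∈ P g ∨ (h⁻¹ * g) * g⁻¹ ∈ P g) := by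
  refine ⟨?_, ?_, ?_⟩
  · intro f hf
    rw [mul_inv_cancel] at hf
    have : (1 : G) ∈ P f ∪ (P f)⁻¹ := Or.inl hf
    rw [h1 f] at this
    exact this rfl
  · intro a b c hba hcb
    have hb : b * a⁻¹ * a = b := by group
    have := h2 a (b * a⁻¹) (c * b⁻¹) hba (by rwa [hb])
    have h3 : c * b⁻¹ * (b * a⁻¹) = c * a⁻¹ := by group
    rwa [h3] at this
  · intro g h hne
    have : h ∈ P g ∪ (P g)⁻¹ := by rw [h1 g]; exact hne
    rcases this with hp | hp
    · left; rwa [mul_inv_cancel_right]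
    · right; rw [mul_inv_cancel_right]; exact hp
end

section
/- Let A be a nontrivial additive subgroup of ℚ and let α > 0 be irrational. Define f_α : ℚ → ℝ by f_α(r) = r if r ≥ 0 and f_α(r) = -α·r if r < 0, and define a ≺_α b iff f_α(a) < f_α(b). Then ≺_α is a strict total order on A such that for all a,b ∈ A with b ≠ 0, either a ≺_α a+b or a ≺_α a-b. -/
/-!
On `r ≥ 0` the map `f_α` is strictly increasing and takes rational values; on `r < 0` it is
strictly decreasing and, `α` being irrational, takes irrational values. Hence it is injective,
so `≺_α` is a strict total order, and from any `a` one of `a ± b` moves away from `0`, which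
increases `f_α`.
-/

/-- The map `f_α` of the statement. -/
noncomputable def weightedAbs (α : ℝ) (r : ℚ) : ℝ :=
  if 0 ≤ r then (r : ℝ) else -α * r

namespace weightedAbs

variable {α : ℝ} {r s : ℚ}

theorem of_nonneg (hr : 0 ≤ r) : weightedAbs α r = r := if_pos hr

theorem of_neg (hr : r < 0) : weightedAbs α r = -α * r := if_neg hr.not_ge

theorem irrational_of_neg (hα : Irrational α) (hr : r < 0) : Irrational (weightedAbs α r) := by
  rw [of_neg hr, neg_mul, ← mul_neg, ← Rat.cast_neg]
  exact hα.mul_ratCast (neg_ne_zero.2 hr.ne)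

theorem injective (hα : Irrational α) : Function.Injective (weightedAbs α) := by
  intro r s hrs
  rcases le_or_gt 0 r with hr | hr <;> rcases le_or_gt 0 s with hs | hs
  · rw [of_nonneg hr, of_nonneg hs] at hrs
    exact_mod_cast hrs
  · exact absurd (hrs.symm.trans (of_nonneg hr)) ((irrational_of_neg hα hs).ne_rat r)
  · exact absurd (hrs.trans (of_nonneg hs)) ((irrational_of_neg hα hr).ne_rat s)
  · rw [of_neg hr, of_neg hs] at hrs
    exact_mod_cast mul_left_cancel₀ (neg_ne_zero.2 hα.ne_zero) hrs

theorem lt_of_nonneg_of_lt (hr : 0 ≤ r) (hrs : r < s) : weightedAbs α r < weightedAbs α s := by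
  rw [of_nonneg hr, of_nonneg (hr.trans hrs.le)]
  exact_mod_cast hrs

theorem lt_of_neg_of_lt (hα : 0 < α) (hr : r < 0) (hsr : s < r) :
    weightedAbs α r < weightedAbs α s := by
  rw [of_neg hr, of_neg (hsr.trans hr)]
  have : (s : ℝ) < r := by exact_mod_cast hsr
  nlinarith

theorem lt_add_or_lt_sub (hα : 0 < α) (r : ℚ) {s : ℚ} (hs : s ≠ 0) :
    weightedAbs α r < weightedAbs α (r + s) ∨ weightedAbs α r < weightedAbs α (r - s) := by
  rcases le_or_gt 0 r with hr | hr <;> rcases hs.lt_or_gt with hs | hs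
  · exact .inr (lt_of_nonneg_of_lt hr (by linarith))
  · exact .inl (lt_of_nonneg_of_lt hr (by linarith))
  · exact .inl (lt_of_neg_of_lt hα hr (by linarith))
  · exact .inr (lt_of_neg_of_lt hα hr (by linarith))

end weightedAbs

theorem stmt6_general (A : AddSubgroup ℚ)
    (α : ℝ) (hirr : Irrational α) (hpos : 0 < α)
    (fα : ℚ → ℝ) (hf : ∀ r : ℚ, fα r = if 0 ≤ r then (r : ℝ) else -α * r) :
    (∀ a ∈ A, ¬ (fα a < fα a)) ∧
    (∀ a ∈ A, ∀ b ∈ A, ∀ c ∈ A, fα a < fα b → fα b < fα c → fα a < fα c) ∧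
    (∀ a ∈ A, ∀ b ∈ A, a ≠ b → fα a < fα b ∨ fα b < fα a) ∧
    (∀ a ∈ A, ∀ b ∈ A, b ≠ 0 → fα a < fα (a + b) ∨ fα a < fα (a - b)) := by
  obtain rfl : fα = weightedAbs α := funext hf
  exact ⟨fun a _ => lt_irrefl _,
    fun _ _ _ _ _ _ => lt_trans,
    fun _ _ _ _ hab => ((weightedAbs.injective hirr).ne hab).lt_or_gt,
    fun a _ _ _ hb => weightedAbs.lt_add_or_lt_sub hpos a hb⟩

/-- For a nontrivial subgroup `A ≤ ℚ` and `α > 0` irrational, the relation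
`a ≺_α b ↔ f_α a < f_α b`, where `f_α r = r` for `r ≥ 0` and `f_α r = -α r` for `r < 0`,
is a locally invariant total ordering of `A`. -/
theorem stmt6 (A : AddSubgroup ℚ) (hA : A ≠ ⊥)
    (α : ℝ) (hirr : Irrational α) (hpos : 0 < α)
    (fα : ℚ → ℝ) (hf : ∀ r : ℚ, fα r = if 0 ≤ r then (r : ℝ) else -α * r) :
    (∀ a ∈ A, ¬ (fα a < fα a)) ∧
    (∀ a ∈ A, ∀ b ∈ A, ∀ c ∈ A, fα a < fα b → fα b < fα c → fα a < fα c) ∧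
    (∀ a ∈ A, ∀ b ∈ A, a ≠ b → fα a < fα b ∨ fα b < fα a) ∧
    (∀ a ∈ A, ∀ b ∈ A, b ≠ 0 → fα a < fα (a + b) ∨ fα a < fα (a - b)) :=
  stmt6_general A α hirr hpos fα hf
end

section
/- Let A be a nontrivial additive subgroup of ℚ. Then A admits uncountably many locally invariant total orderings. More precisely, the family of orderings ≺_α (for α > 0 irrational), defined by a ≺_α b iff f_α(a) < f_α(b) where f_α(r) = r for r ≥ 0 and f_α(r) = -α·r for r < 0, contains uncountably many pairwise distinct orderings. -/
/-- A nontrivial subgroup `A ≤ ℚ` admits uncountably many locally invariant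
total orderings; indeed the family `≺_α` (for `α > 0` irrational) is uncountable. -/
theorem stmt7 (A : AddSubgroup ℚ) (hA : A ≠ ⊥)
    (fα : ℝ → ℚ → ℝ)
    (hf : ∀ (α : ℝ) (r : ℚ), fα α r = if 0 ≤ r then (r : ℝ) else -α * r) :
    ¬ Set.Countable { r : A → A → Prop |
      ((∀ a : A, ¬ r a a) ∧
       (∀ a b c : A, r a b → r b c → r a c) ∧
       (∀ a b : A, a ≠ b → r a b ∨ r b a) ∧
       (∀ a b : A, b ≠ 0 → r a (a + b) ∨ r a (a - b))) ∧
      ∃ α : ℝ, Irrational α ∧ 0 < α ∧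
        r = fun a b : A => fα α (a : ℚ) < fα α (b : ℚ) } := by
  intro hcount
  -- obtain a positive element q ∈ A
  obtain ⟨⟨x, hxA⟩, hx0⟩ := AddSubgroup.ne_bot_iff_exists_ne_zero.mp hA
  have hx0' : x ≠ 0 := by
    simpa [Subtype.ext_iff] using hx0
  obtain ⟨q, hqA, hq0⟩ : ∃ q : ℚ, q ∈ A ∧ 0 < q := by
    rcases lt_or_gt_of_ne hx0' with h | h
    · exact ⟨-x, A.neg_mem hxA, by linarith⟩
    · exact ⟨x, hxA, h⟩
  set S : Set ℝ := {α : ℝ | Irrational α ∧ 0 < α} with hS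
  set g : ℝ → (A → A → Prop) :=
    fun α => fun a b : A => fα α (a : ℚ) < fα α (b : ℚ) with hg
  -- f_α is injective for irrational positive α
  have finj : ∀ α : ℝ, Irrational α → 0 < α → ∀ r s : ℚ, fα α r = fα α s → r = s := by
    intro α hirr hpos r s h
    rw [hf, hf] at h
    split_ifs at h with h1 h2 h2
    · exact_mod_cast h
    · push_neg at h2
      exfalso
      have hs : (s : ℝ) < 0 := by exact_mod_cast h2
      have hsne : (s : ℝ) ≠ 0 := ne_of_lt hs
      have hα : α = (r : ℝ) / (-(s : ℝ)) := by
        rw [eq_div_iff (by linarith : -(s:ℝ) ≠ 0)]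
        linarith
      exact hirr ⟨r / (-s), by push_cast; rw [hα]⟩
    · push_neg at h1
      exfalso
      have hr : (r : ℝ) < 0 := by exact_mod_cast h1
      have hrne : (r : ℝ) ≠ 0 := ne_of_lt hr
      have hα : α = (s : ℝ) / (-(r : ℝ)) := by
        rw [eq_div_iff (by linarith : -(r:ℝ) ≠ 0)]
        linarith
      exact hirr ⟨s / (-r), by push_cast; rw [hα]⟩
    · have : (r : ℝ) = s := by
        have hα : α ≠ 0 := ne_of_gt hpos
        exact mul_left_cancel₀ (neg_ne_zero.mpr hα) (by linarith : (-α) * r = (-α) * s)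
      exact_mod_cast this
  -- each g α (for α ∈ S) lies in the set
  have hmaps : Set.MapsTo g S { r : A → A → Prop |
      ((∀ a : A, ¬ r a a) ∧
       (∀ a b c : A, r a b → r b c → r a c) ∧
       (∀ a b : A, a ≠ b → r a b ∨ r b a) ∧
       (∀ a b : A, b ≠ 0 → r a (a + b) ∨ r a (a - b))) ∧
      ∃ α : ℝ, Irrational α ∧ 0 < α ∧
        r = fun a b : A => fα α (a : ℚ) < fα α (b : ℚ) } := by
    rintro α ⟨hirr, hpos⟩
    refine ⟨⟨?_, ?_, ?_, ?_⟩, α, hirr, hpos, rfl⟩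
    · intro a; exact lt_irrefl _
    · intro a b c h1 h2; exact lt_trans h1 h2
    · intro a b hab
      have hne : (a : ℚ) ≠ (b : ℚ) := fun h => hab (Subtype.ext h)
      have : fα α (a : ℚ) ≠ fα α (b : ℚ) := fun h => hne (finj α hirr hpos _ _ h)
      rcases this.lt_or_gt with h | h
      · exact Or.inl h
      · exact Or.inr h
    · intro a b hb
      have hbq : (b : ℚ) ≠ 0 := fun h => hb (ZeroMemClass.coe_eq_zero.mp h)
      have hadd : ((a + b : A) : ℚ) = (a : ℚ) + (b : ℚ) := rfl
      have hsub2 : ((a - b : A) : ℚ) = (a : ℚ) - (b : ℚ) := rfl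
      show fα α (a : ℚ) < fα α ((a + b : A) : ℚ) ∨ fα α (a : ℚ) < fα α ((a - b : A) : ℚ)
      rw [hadd, hsub2]
      rcases le_or_gt 0 ((a : ℚ)) with hx0 | hx0
      · rcases lt_or_gt_of_ne hbq with hy0 | hy0
        · right
          rw [hf, hf, if_pos hx0, if_pos (by linarith : (0:ℚ) ≤ (a:ℚ) - (b:ℚ))]
          exact_mod_cast (by linarith : (a:ℚ) < (a:ℚ) - (b:ℚ))
        · left
          rw [hf, hf, if_pos hx0, if_pos (by linarith : (0:ℚ) ≤ (a:ℚ) + (b:ℚ))]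
          exact_mod_cast (by linarith : (a:ℚ) < (a:ℚ) + (b:ℚ))
      · rcases lt_or_gt_of_ne hbq with hy0 | hy0
        · left
          rw [hf, hf, if_neg (not_le.mpr hx0),
            if_neg (by push_neg; linarith : ¬ (0:ℚ) ≤ (a:ℚ) + (b:ℚ))]
          have hxy : (((a:ℚ) + (b:ℚ) : ℚ) : ℝ) < ((a:ℚ) : ℝ) := by
            exact_mod_cast (by linarith : (a:ℚ) + (b:ℚ) < (a:ℚ))
          nlinarith
        · right
          rw [hf, hf, if_neg (not_le.mpr hx0),
            if_neg (by push_neg; linarith : ¬ (0:ℚ) ≤ (a:ℚ) - (b:ℚ))]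
          have hxy : (((a:ℚ) - (b:ℚ) : ℚ) : ℝ) < ((a:ℚ) : ℝ) := by
            exact_mod_cast (by linarith : (a:ℚ) - (b:ℚ) < (a:ℚ))
          nlinarith
  -- g is injective on S
  have hinj : Set.InjOn g S := by
    have key : ∀ α α' : ℝ, α ∈ S → α' ∈ S → α < α' → g α ≠ g α' := by
      rintro α α' ⟨hirr, hpos⟩ ⟨hirr', hpos'⟩ hlt heq
      obtain ⟨c, hc1, hc2⟩ := exists_rat_btwn hlt
      have hcpos : 0 < c := by
        have : (0:ℝ) < c := lt_trans hpos hc1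
        exact_mod_cast this
      have hnum : 0 < c.num := Rat.num_pos.mpr hcpos
      have hden : 0 < (c.den : ℚ) := by exact_mod_cast c.pos
      set aq : ℚ := -((c.den : ℚ) * q) with haq
      set bq : ℚ := (c.num : ℚ) * q with hbq
      have haA : aq ∈ A := by
        have h1 : ((c.den : ℤ) • q) ∈ A := zsmul_mem hqA _
        have h2 : ((c.den : ℤ) • q : ℚ) = (c.den : ℚ) * q := by
          rw [zsmul_eq_mul]; push_cast; ring
        rw [haq, ← h2]
        exact A.neg_mem h1
      have hbA : bq ∈ A := by
        have h1 : (c.num • q) ∈ A := zsmul_mem hqA _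
        have h2 : (c.num • q : ℚ) = (c.num : ℚ) * q := by rw [zsmul_eq_mul]
        rw [hbq, ← h2]; exact h1
      have haneg : aq < 0 := by
        have : 0 < (c.den : ℚ) * q := mul_pos hden hq0
        rw [haq]; linarith
      have hbpos : 0 ≤ bq := by
        have : 0 < (c.num : ℚ) * q := mul_pos (by exact_mod_cast hnum) hq0
        rw [hbq]; linarith
      have hvala : ∀ β : ℝ, fα β aq = β * ((c.den : ℝ) * q) := by
        intro β
        rw [hf, if_neg (not_le.mpr haneg), haq]
        push_cast
        ring
      have hvalb : ∀ β : ℝ, fα β bq = (c.num : ℝ) * q := by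
        intro β
        rw [hf, if_pos hbpos, hbq]
        push_cast
        ring
      have hc : (c : ℝ) = (c.num : ℝ) / (c.den : ℝ) := by
        rw [Rat.cast_def]
      have hdenR : (0:ℝ) < (c.den : ℝ) := by exact_mod_cast c.pos
      have hqR : (0:ℝ) < (q : ℝ) := by exact_mod_cast hq0
      have h1 : g α ⟨aq, haA⟩ ⟨bq, hbA⟩ := by
        show fα α aq < fα α bq
        rw [hvala, hvalb]
        have hstep : α * (c.den : ℝ) < (c.num : ℝ) := by
          rw [hc] at hc1
          have := mul_lt_mul_of_pos_right hc1 hdenR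
          have heq2 : ((c.num : ℝ) / (c.den : ℝ)) * (c.den : ℝ) = (c.num : ℝ) := by
            field_simp
          linarith [heq2 ▸ this]
        calc α * ((c.den : ℝ) * q) = (α * (c.den : ℝ)) * q := by ring
          _ < (c.num : ℝ) * q := mul_lt_mul_of_pos_right hstep hqR
      have h2 : ¬ g α' ⟨aq, haA⟩ ⟨bq, hbA⟩ := by
        show ¬ fα α' aq < fα α' bq
        rw [hvala, hvalb, not_lt]
        have hstep : (c.num : ℝ) ≤ α' * (c.den : ℝ) := by
          rw [hc] at hc2
          have := mul_lt_mul_of_pos_right hc2 hdenR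
          have heq2 : ((c.num : ℝ) / (c.den : ℝ)) * (c.den : ℝ) = (c.num : ℝ) := by
            field_simp
          linarith [heq2 ▸ this]
        calc (c.num : ℝ) * q ≤ (α' * (c.den : ℝ)) * q :=
              mul_le_mul_of_nonneg_right hstep (le_of_lt hqR)
          _ = α' * ((c.den : ℝ) * q) := by ring
      rw [heq] at h1
      exact h2 h1
    intro α hα α' hα' heq
    by_contra hne
    rcases lt_or_gt_of_ne hne with h | h
    · exact key α α' hα hα' h heq
    · exact key α' α hα' hα h heq.symm
  -- hence S is countable
  have hScount : S.Countable := hmaps.countable_of_injOn hinj hcount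
  -- but S countable implies ℝ countable, contradiction
  have hUniv : (Set.univ : Set ℝ).Countable := by
    have h1 : (Neg.neg '' S : Set ℝ).Countable := hScount.image _
    have h2 : (Set.range ((↑) : ℚ → ℝ)).Countable := Set.countable_range _
    have hsub : (Set.univ : Set ℝ) ⊆ S ∪ (Neg.neg '' S) ∪ Set.range ((↑) : ℚ → ℝ) := by
      intro z _
      by_cases hz : Irrational z
      · rcases lt_trichotomy z 0 with h | h | h
        · exact Or.inl (Or.inr ⟨-z, ⟨hz.neg, by linarith⟩, by ring⟩)
        · exact absurd ⟨(0:ℚ), by simp [h]⟩ hz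
        · exact Or.inl (Or.inl ⟨hz, h⟩)
      · rw [Irrational] at hz
        push_neg at hz
        exact Or.inr hz
    exact Set.Countable.mono hsub ((hScount.union h1).union h2)
  exact Cardinal.not_countable_real hUniv
end

section
/- Let A be a countable torsion-free abelian group and P ⊆ A the positive cone of a bi-ordering < of A. Then there exist uncountably many functions f : P → P satisfying a < f(a) for all a ∈ P and f(a)·f(b) ≤ f(a·b) for all a, b ∈ P. -/
/-- auxiliary increasing sequence built from an enumeration -/
def cseq8 {A : Type*} [Mul A] (e : ℕ → A) : ℕ → A
  | 0 => e 0
  | n + 1 => cseq8 e n * e (n + 1)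

set_option maxHeartbeats 1000000 in
lemma aux8 {A : Type*} [CommGroup A] (x y : A) (p q r s : ℕ) :
    (x ^ (p + q) * y ^ (r + s)) * (x ^ p * y ^ r)⁻¹ = x ^ q * y ^ s := by
  rw [pow_add, pow_add, mul_mul_mul_comm, mul_comm (x ^ p * y ^ r), mul_inv_cancel_right]

/-- For a countable torsion-free abelian group `A` with bi-ordering positive
cone `P`, there are uncountably many `f : P → P` with `a < f a` and `f a * f b ≤ f (a*b)`. -/
theorem stmt8 {A : Type*} [CommGroup A] [Countable A] [Nontrivial A]
    (htf : ∀ g : A, g ≠ 1 → ∀ n : ℕ, 0 < n → g ^ n ≠ 1)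
    (P : Set A)
    (hmul : ∀ a ∈ P, ∀ b ∈ P, a * b ∈ P)
    (hdisj : P ∩ P⁻¹ = ∅)
    (hcover : {(1 : A)}ᶜ = P ∪ P⁻¹) :
    ¬ Set.Countable { f : P → P |
      (∀ a : P, (f a : A) * (a : A)⁻¹ ∈ P) ∧
      (∀ a b : P, (f ⟨(a : A) * (b : A), hmul (a : A) a.2 (b : A) b.2⟩ : A) *
        ((f a : A) * (f b : A))⁻¹ ∈ P ∪ {1}) } := by
  intro hC
  classical
  -- basic facts about P
  have hone : (1 : A) ∉ P := by
    intro h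
    have : (1 : A) ∈ P ∩ P⁻¹ := ⟨h, by simpa using h⟩
    rw [hdisj] at this; exact this
  have hinvnot : ∀ a ∈ P, a⁻¹ ∉ P := by
    intro a ha h
    have : a ∈ P ∩ P⁻¹ := ⟨ha, by simpa using h⟩
    rw [hdisj] at this; exact this
  have hne : P.Nonempty := by
    obtain ⟨g, hg⟩ := exists_ne (1 : A)
    have hg' : g ∈ P ∪ P⁻¹ := by rw [← hcover]; exact hg
    rcases hg' with h | h
    · exact ⟨g, h⟩
    · exact ⟨g⁻¹, by simpa using h⟩
  -- powers stay in P
  have hpow : ∀ a ∈ P, ∀ k : ℕ, 0 < k → a ^ k ∈ P := by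
    intro a ha k hk
    induction k with
    | zero => omega
    | succ n ih =>
      rcases Nat.eq_zero_or_pos n with h | h
      · subst h; simpa using ha
      · rw [pow_succ]; exact hmul _ (ih h) _ ha
  -- enumeration of P
  have hPc : P.Countable := P.to_countable
  haveI := hPc.to_subtype
  haveI : Nonempty P := hne.to_subtype
  obtain ⟨e', he'⟩ := exists_surjective_nat P
  set e : ℕ → A := fun n => (e' n : A) with he
  have heP : ∀ n, e n ∈ P := fun n => (e' n).2
  set c : ℕ → A := cseq8 e with hcdef
  have hc0 : c 0 = e 0 := rfl
  have hcs : ∀ n, c (n + 1) = c n * e (n + 1) := fun n => rfl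
  have hcP : ∀ n, c n ∈ P := by
    intro n
    induction n with
    | zero => rw [hc0]; exact heP 0
    | succ k ih => rw [hcs]; exact hmul _ ih _ (heP (k + 1))
  have hcgap : ∀ k n, k < n → c n * (c k)⁻¹ ∈ P := by
    intro k n hkn
    induction n with
    | zero => omega
    | succ m ih =>
      rcases Nat.lt_succ_iff_lt_or_eq.mp hkn with h | h
      · have h1 := ih h
        have h2 : c (m + 1) * (c k)⁻¹ = e (m + 1) * (c m * (c k)⁻¹) := by
          rw [hcs]; simp [mul_comm, mul_left_comm, mul_assoc]
        rw [h2]; exact hmul _ (heP (m + 1)) _ h1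
      · subst h
        have h2 : c (k + 1) * (c k)⁻¹ = e (k + 1) := by
          rw [hcs]; simp [mul_comm]
        rw [h2]; exact heP (k + 1)
  -- transitivity of the order
  have htr : ∀ x y z : A, y * x⁻¹ ∈ P ∪ {1} → z * y⁻¹ ∈ P ∪ {1} → z * x⁻¹ ∈ P ∪ {1} := by
    intro x y z h1 h2
    have key : z * x⁻¹ = (z * y⁻¹) * (y * x⁻¹) := by group
    rw [key]
    rcases h1 with h1 | h1 <;> rcases h2 with h2 | h2
    · left; exact hmul _ h2 _ h1
    · rw [Set.mem_singleton_iff] at h2; rw [h2, one_mul]; left; exact h1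
    · rw [Set.mem_singleton_iff] at h1; rw [h1, mul_one]; left; exact h2
    · rw [Set.mem_singleton_iff] at h1 h2; rw [h1, h2, mul_one]; right; rfl
  -- every element of P is below some c n
  have hex : ∀ a : P, ∃ n, c n * (a : A)⁻¹ ∈ P ∪ {1} := by
    intro a
    obtain ⟨k, hk⟩ := he' a
    have hek : e k = (a : A) := by rw [he]; simp [hk]
    refine ⟨k, ?_⟩
    cases k with
    | zero => right; rw [hc0, hek]; simp
    | succ m =>
      left
      have : c (m + 1) * (a : A)⁻¹ = c m := by rw [hcs, hek]; simp
      rw [this]; exact hcP m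
  set m : P → ℕ := fun a => Nat.find (hex a) with hm
  have hmspec : ∀ a : P, c (m a) * (a : A)⁻¹ ∈ P ∪ {1} := fun a => Nat.find_spec (hex a)
  have hmmono : ∀ a b : P, (b : A) * (a : A)⁻¹ ∈ P ∪ {1} → m a ≤ m b := by
    intro a b h
    exact Nat.find_le (htr _ _ _ h (hmspec b))
  have hmc : ∀ n, m ⟨c n, hcP n⟩ = n := by
    intro n
    apply le_antisymm
    · exact Nat.find_le (by right; simp)
    · by_contra hlt
      push_neg at hlt
      have hfind := hmspec ⟨c n, hcP n⟩
      set k := m ⟨c n, hcP n⟩ with hk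
      rcases hfind with h | h
      · have h' : (c n * (c k)⁻¹)⁻¹ ∈ P := by
          simpa [mul_inv_rev, mul_comm] using h
        exact hinvnot _ (hcgap _ _ hlt) h'
      · rw [Set.mem_singleton_iff] at h
        have h1 : c k = c n := by
          have := mul_eq_one_iff_eq_inv.mp h
          simpa using this
        have : c n * (c k)⁻¹ = 1 := by rw [h1]; simp
        exact hone (this ▸ hcgap _ _ hlt)
  -- the sum function
  set S : (ℕ → Bool) → ℕ → ℕ := fun ε n => ∑ i ∈ Finset.range n, (ε i).toNat with hS
  have hSmono : ∀ ε : ℕ → Bool, ∀ i j : ℕ, i ≤ j → S ε i ≤ S ε j := by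
    intro ε i j hij
    apply Finset.sum_le_sum_of_subset
    exact Finset.range_subset_range.mpr hij
  -- the family of functions
  set F : (ℕ → Bool) → P → P :=
    fun ε a => ⟨(a : A) ^ (2 + S ε (m a)), hpow _ a.2 _ (by omega)⟩ with hF
  -- each F ε is in the set
  have hFmem : ∀ ε : ℕ → Bool, F ε ∈ { f : P → P |
      (∀ a : P, (f a : A) * (a : A)⁻¹ ∈ P) ∧
      (∀ a b : P, (f ⟨(a : A) * (b : A), hmul (a : A) a.2 (b : A) b.2⟩ : A) *
        ((f a : A) * (f b : A))⁻¹ ∈ P ∪ {1}) } := by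
    intro ε
    constructor
    · intro a
      show (a : A) ^ (2 + S ε (m a)) * (a : A)⁻¹ ∈ P
      have h1 : (a : A) ^ (2 + S ε (m a)) = (a : A) ^ (1 + S ε (m a)) * a := by
        rw [← pow_succ]
        congr 1
        omega
      rw [h1, mul_inv_cancel_right]
      exact hpow _ a.2 _ (by omega)
    · intro a b
      set ab : P := ⟨(a : A) * (b : A), hmul (a : A) a.2 (b : A) b.2⟩ with hab
      set u := 2 + S ε (m ab) with hu
      set v := 2 + S ε (m a) with hv
      set w := 2 + S ε (m b) with hw
      have hva : v ≤ u := by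
        have : m a ≤ m ab := by
          apply hmmono
          left
          have : (ab : A) * (a : A)⁻¹ = (b : A) := by rw [hab]; simp [mul_comm]
          rw [this]; exact b.2
        have := hSmono ε _ _ this
        omega
      have hwa : w ≤ u := by
        have : m b ≤ m ab := by
          apply hmmono
          left
          have : (ab : A) * (b : A)⁻¹ = (a : A) := by rw [hab]; simp
          rw [this]; exact a.2
        have := hSmono ε _ _ this
        omega
      show ((a : A) * (b : A)) ^ u * ((a : A) ^ v * (b : A) ^ w)⁻¹ ∈ P ∪ {1}
      set x := (a : A) with hx
      set y := (b : A) with hy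
      have hd1 : u = v + (u - v) := by omega
      have hd2 : u = w + (u - w) := by omega
      have key : (x * y) ^ u * (x ^ v * y ^ w)⁻¹ = x ^ (u - v) * y ^ (u - w) := by
        calc (x * y) ^ u * (x ^ v * y ^ w)⁻¹
            = (x ^ (v + (u - v)) * y ^ (w + (u - w))) * (x ^ v * y ^ w)⁻¹ := by
              rw [mul_pow, ← hd1, ← hd2]
          _ = x ^ (u - v) * y ^ (u - w) := aux8 x y v (u - v) w (u - w)
      rw [key]
      rcases Nat.eq_zero_or_pos (u - v) with h1 | h1 <;>
        rcases Nat.eq_zero_or_pos (u - w) with h2 | h2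
      · right; rw [h1, h2]; simp
      · left; rw [h1]; simpa using hpow _ b.2 _ h2
      · left; rw [h2]; simpa using hpow _ a.2 _ h1
      · left; exact hmul _ (hpow _ a.2 _ h1) _ (hpow _ b.2 _ h2)
  -- power injectivity
  have hpinj : ∀ x : A, x ≠ 1 → ∀ i j : ℕ, x ^ i = x ^ j → i = j := by
    intro x hx i j hij
    rcases le_total i j with h | h
    · by_contra hne'
      have h2 : x ^ i * x ^ (j - i) = x ^ i * 1 := by
        rw [mul_one, ← pow_add, Nat.add_sub_cancel' h, ← hij]
      exact htf x hx (j - i) (by omega) (mul_left_cancel h2)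
    · by_contra hne'
      have h2 : x ^ j * x ^ (i - j) = x ^ j * 1 := by
        rw [mul_one, ← pow_add, Nat.add_sub_cancel' h, hij]
      exact htf x hx (i - j) (by omega) (mul_left_cancel h2)
  -- injectivity of F
  have hFinj : Function.Injective F := by
    intro ε ε' hεε
    have hSn : ∀ n, S ε n = S ε' n := by
      intro n
      have h1 := congrFun hεε ⟨c n, hcP n⟩
      have h2 : (c n) ^ (2 + S ε (m ⟨c n, hcP n⟩)) = (c n) ^ (2 + S ε' (m ⟨c n, hcP n⟩)) :=
        Subtype.ext_iff.mp h1
      rw [hmc n] at h2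
      have hcne : c n ≠ 1 := fun h => hone (h ▸ hcP n)
      have := hpinj _ hcne _ _ h2
      omega
    have hSsucc : ∀ δ : ℕ → Bool, ∀ n, S δ (n + 1) = S δ n + (δ n).toNat := by
      intro δ n
      simp only [hS]
      exact Finset.sum_range_succ _ n
    funext n
    have h1 := hSn (n + 1)
    have h2 := hSn n
    rw [hSsucc ε n, hSsucc ε' n, h2] at h1
    have h3 : (ε n).toNat = (ε' n).toNat := by omega
    have h4 : ∀ b b' : Bool, b.toNat = b'.toNat → b = b' := by decide
    exact h4 _ _ h3
  -- conclude: (ℕ → Bool) would be countable, contradiction via Cantor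
  haveI := hC.to_subtype
  have hcble : Countable (ℕ → Bool) := by
    have : Function.Injective (fun ε : ℕ → Bool =>
        (⟨F ε, hFmem ε⟩ : { f : P → P |
      (∀ a : P, (f a : A) * (a : A)⁻¹ ∈ P) ∧
      (∀ a b : P, (f ⟨(a : A) * (b : A), hmul (a : A) a.2 (b : A) b.2⟩ : A) *
        ((f a : A) * (f b : A))⁻¹ ∈ P ∪ {1}) })) := by
      intro ε ε' h
      exact hFinj (by simpa using h)
    exact this.countable
  have hsetinj : Function.Injective (fun s : Set ℕ => fun n => decide (n ∈ s)) := by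
    intro s t h
    ext n
    exact decide_eq_decide.mp (congrFun h n)
  have : Countable (Set ℕ) := hsetinj.countable
  obtain ⟨g, hg⟩ := exists_injective_nat (Set ℕ)
  exact Function.cantor_injective g hg
end

section
/- Let A be a countable torsion-free abelian group with bi-ordering positive cone P, and let f : P → P satisfy a < f(a) and f(a)·f(b) < f(a·b) for all a,b ∈ P. Define P_1 = P ∪ P⁻¹, P_a = P⁻¹ if a ∈ P⁻¹, and P_a = P ∪ { b ∈ A : b < f(a)⁻¹ } if a ∈ P. Then (P_a)_{a∈A} is an equivariant field of cones: P_a ∪ P_a⁻¹ = A \ {1} for all a, and b ∈ P_a together with c ∈ P_{b·a} implies c·b ∈ P_a. -/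
/-- The family `Q 1 = P ∪ P⁻¹`, `Q a = P⁻¹` for `a ∈ P⁻¹`, and
`Q a = P ∪ {b | b < (f a)⁻¹}` for `a ∈ P` (where `b < c ↔ c * b⁻¹ ∈ P`)
is an equivariant field of cones. -/
theorem stmt9 {A : Type*} [CommGroup A] [Countable A]
    (P : Set A)
    (hmul : ∀ a ∈ P, ∀ b ∈ P, a * b ∈ P)
    (hdisj : P ∩ P⁻¹ = ∅)
    (hcover : {(1 : A)}ᶜ = P ∪ P⁻¹)
    (f : P → P)
    (hf1 : ∀ a : P, (f a : A) * (a : A)⁻¹ ∈ P)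
    (hf2 : ∀ a b : P, (f ⟨(a : A) * (b : A), hmul (a : A) a.2 (b : A) b.2⟩ : A) *
      ((f a : A) * (f b : A))⁻¹ ∈ P)
    (Q : A → Set A)
    (hQ1 : Q 1 = P ∪ P⁻¹)
    (hQN : ∀ a ∈ P⁻¹, Q a = P⁻¹)
    (hQP : ∀ (a : A) (ha : a ∈ P),
      Q a = P ∪ {b : A | (f ⟨a, ha⟩ : A)⁻¹ * b⁻¹ ∈ P}) :
    (∀ a : A, Q a ∪ (Q a)⁻¹ = {(1 : A)}ᶜ) ∧
    (∀ a b c : A, b ∈ Q a → c ∈ Q (b * a) → c * b ∈ Q a) := by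
  have hne : ∀ x ∈ P, x⁻¹ ∉ P := by
    intro x hx hx'
    have : x ∈ P ∩ P⁻¹ := ⟨hx, by simpa using hx'⟩
    simp [hdisj] at this
  have h1P : (1 : A) ∉ P := fun h => hne 1 h (by simpa using h)
  have hcases : ∀ x : A, x = 1 ∨ x ∈ P ∨ x⁻¹ ∈ P := by
    intro x
    by_cases h : x = 1
    · exact Or.inl h
    · have hx : x ∈ ({(1 : A)}ᶜ : Set A) := h
      rw [hcover] at hx
      rcases hx with hx | hx
      · exact Or.inr (Or.inl hx)
      · exact Or.inr (Or.inr (by simpa using hx))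
  have hx1 : ∀ x : A, x ∈ P → x ≠ 1 := by
    rintro x hx rfl; exact h1P hx
  constructor
  · intro a
    rcases hcases a with rfl | ha | ha
    · rw [hQ1]
      have hsymm : (P ∪ P⁻¹)⁻¹ = P ∪ P⁻¹ := by
        ext x
        simp only [Set.mem_inv, Set.mem_union, inv_inv]
        tauto
      rw [hsymm, Set.union_self]
      exact hcover.symm
    · rw [hQP a ha]
      have hfa : (f ⟨a, ha⟩ : A) ∈ P := (f ⟨a, ha⟩).2
      ext x
      simp only [Set.mem_union, Set.mem_inv, Set.mem_compl_iff, Set.mem_singleton_iff,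
        Set.mem_setOf_eq]
      constructor
      · rintro ((h | h) | (h | h))
        · exact hx1 x h
        · rintro rfl
          exact hne _ hfa (by simpa using h)
        · rintro rfl
          exact h1P (by simpa using h)
        · rintro rfl
          exact hne _ hfa (by simpa using h)
      · intro h
        rcases hcases x with rfl | hx | hx
        · exact absurd rfl h
        · exact Or.inl (Or.inl hx)
        · exact Or.inr (Or.inl (by simpa using hx))
    · rw [hQN a (by simpa using ha)]
      rw [inv_inv, Set.union_comm]
      exact hcover.symm
  · intro a b c hb hc
    rcases hcases a with rfl | ha | ha
    · -- a = 1
      rw [hQ1] at hb ⊢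
      rw [mul_one] at hc
      rcases hb with hb | hb
      · -- b ∈ P
        rw [hQP b hb] at hc
        rcases hc with hc | hc
        · exact Or.inl (hmul c hc b hb)
        · have hc' : (f ⟨b, hb⟩ : A)⁻¹ * c⁻¹ ∈ P := hc
          have hfb : (f ⟨b, hb⟩ : A) * b⁻¹ ∈ P := hf1 ⟨b, hb⟩
          have : (c * b)⁻¹ ∈ P := by
            have := hmul _ hc' _ hfb
            have h2 : ((f ⟨b, hb⟩ : A)⁻¹ * c⁻¹) * ((f ⟨b, hb⟩ : A) * b⁻¹) = (c * b)⁻¹ := by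
              simp [mul_inv, mul_comm, mul_left_comm, mul_assoc]
            rwa [h2] at this
          exact Or.inr this
      · -- b ∈ P⁻¹
        have hb' : b⁻¹ ∈ P := by simpa using hb
        rw [hQN b hb] at hc
        have hc' : c⁻¹ ∈ P := by simpa using hc
        refine Or.inr ?_
        have : (c * b)⁻¹ ∈ P := by
          have := hmul _ hc' _ hb'
          rwa [← mul_inv] at this
        simpa using this
    · -- a ∈ P
      rw [hQP a ha] at hb ⊢
      have hfa : (f ⟨a, ha⟩ : A) ∈ P := (f ⟨a, ha⟩).2
      rcases hb with hb | hb
      · -- b ∈ P, so b*a ∈ P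
        have hba : b * a ∈ P := hmul b hb a ha
        rw [hQP (b * a) hba] at hc
        rcases hc with hc | hc
        · exact Or.inl (hmul c hc b hb)
        · refine Or.inr ?_
          have hc' : (f ⟨b * a, hba⟩ : A)⁻¹ * c⁻¹ ∈ P := hc
          have h2 : (f ⟨b * a, hba⟩ : A) * ((f ⟨b, hb⟩ : A) * (f ⟨a, ha⟩ : A))⁻¹ ∈ P :=
            hf2 ⟨b, hb⟩ ⟨a, ha⟩
          have h3 : (f ⟨b, hb⟩ : A) * b⁻¹ ∈ P := hf1 ⟨b, hb⟩
          have hmem := hmul _ (hmul _ hc' _ h2) _ h3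
          have heq : ((f ⟨b * a, hba⟩ : A)⁻¹ * c⁻¹) *
              ((f ⟨b * a, hba⟩ : A) * ((f ⟨b, hb⟩ : A) * (f ⟨a, ha⟩ : A))⁻¹) *
              ((f ⟨b, hb⟩ : A) * b⁻¹) = (f ⟨a, ha⟩ : A)⁻¹ * (c * b)⁻¹ := by
            simp [mul_inv, mul_comm, mul_left_comm, mul_assoc]
          show (f ⟨a, ha⟩ : A)⁻¹ * (c * b)⁻¹ ∈ P
          rwa [heq] at hmem
      · -- b < f(a)⁻¹, so b*a ∈ P⁻¹
        have hb' : (f ⟨a, ha⟩ : A)⁻¹ * b⁻¹ ∈ P := hb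
        have hfa1 : (f ⟨a, ha⟩ : A) * a⁻¹ ∈ P := hf1 ⟨a, ha⟩
        have hbainv : (b * a)⁻¹ ∈ P := by
          have := hmul _ hb' _ hfa1
          have heq : ((f ⟨a, ha⟩ : A)⁻¹ * b⁻¹) * ((f ⟨a, ha⟩ : A) * a⁻¹) = (b * a)⁻¹ := by
            simp [mul_inv, mul_comm, mul_left_comm, mul_assoc]
          rwa [heq] at this
        rw [hQN (b * a) (by simpa using hbainv)] at hc
        have hc' : c⁻¹ ∈ P := by simpa using hc
        refine Or.inr ?_
        have hmem := hmul _ hb' _ hc'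
        have heq : ((f ⟨a, ha⟩ : A)⁻¹ * b⁻¹) * c⁻¹ = (f ⟨a, ha⟩ : A)⁻¹ * (c * b)⁻¹ := by
          group
        show (f ⟨a, ha⟩ : A)⁻¹ * (c * b)⁻¹ ∈ P
        rwa [heq] at hmem
    · -- a ∈ P⁻¹
      rw [hQN a (by simpa using ha)] at hb ⊢
      have ha' : a⁻¹ ∈ P := by simpa using ha
      have hb' : b⁻¹ ∈ P := by simpa using hb
      have hba : (b * a)⁻¹ ∈ P := by
        have := hmul _ hb' _ ha'; rwa [← mul_inv] at this
      rw [hQN (b * a) (by simpa using hba)] at hc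
      have hc' : c⁻¹ ∈ P := by simpa using hc
      have : (c * b)⁻¹ ∈ P := by
        have := hmul _ hc' _ hb'; rwa [← mul_inv] at this
      simpa using this
end

section
/- Let A be a countable torsion-free abelian group with bi-ordering positive cone P, and let f : P → P satisfy a < f(a) and f(a)·f(b) < f(a·b) for all a,b ∈ P. With P_1 = P ∪ P⁻¹, P_a = P⁻¹ for a ∈ P⁻¹, and P_a = P ∪ { b : b < f(a)⁻¹ } for a ∈ P, the resulting equivariant field of cones fails totality: for any a ∈ P, setting b = a·f(a)⁻¹, we have b·a⁻¹ ∉ P_a and a·b⁻¹ ∉ P_b. -/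
/-- The equivariant field of cones of Statement 9 fails totality:
for `a ∈ P` and `b = a * (f a)⁻¹`, `b*a⁻¹ ∉ Q a` and `a*b⁻¹ ∉ Q b`. -/
theorem stmt10 {A : Type*} [CommGroup A] [Countable A] [Nontrivial A]
    (P : Set A)
    (hmul : ∀ a ∈ P, ∀ b ∈ P, a * b ∈ P)
    (hdisj : P ∩ P⁻¹ = ∅)
    (hcover : {(1 : A)}ᶜ = P ∪ P⁻¹)
    (f : P → P)
    (hf1 : ∀ a : P, (f a : A) * (a : A)⁻¹ ∈ P)
    (hf2 : ∀ a b : P, (f ⟨(a : A) * (b : A), hmul (a : A) a.2 (b : A) b.2⟩ : A) *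
      ((f a : A) * (f b : A))⁻¹ ∈ P)
    (Q : A → Set A)
    (hQ1 : Q 1 = P ∪ P⁻¹)
    (hQN : ∀ a ∈ P⁻¹, Q a = P⁻¹)
    (hQP : ∀ (a : A) (ha : a ∈ P),
      Q a = P ∪ {b : A | (f ⟨a, ha⟩ : A)⁻¹ * b⁻¹ ∈ P}) :
    ∀ (a : A) (ha : a ∈ P),
      (a * (f ⟨a, ha⟩ : A)⁻¹) * a⁻¹ ∉ Q a ∧
      a * (a * (f ⟨a, ha⟩ : A)⁻¹)⁻¹ ∉ Q (a * (f ⟨a, ha⟩ : A)⁻¹) := by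
  intro a ha
  have hdisj' : ∀ x : A, x ∈ P → x⁻¹ ∉ P := by
    intro x hx hx'
    have : x⁻¹ ∈ P ∩ P⁻¹ := ⟨hx', by simpa using hx⟩
    simp [hdisj] at this
  have h1 : (1 : A) ∉ P := by
    intro h
    have : (1 : A) ∈ P ∪ P⁻¹ := Or.inl h
    rw [← hcover] at this
    simp at this
  have hfa : (f ⟨a, ha⟩ : A) ∈ P := (f ⟨a, ha⟩).2
  constructor
  · rw [hQP a ha]
    rintro (h | h)
    · have : (a * (f ⟨a, ha⟩ : A)⁻¹) * a⁻¹ = (f ⟨a, ha⟩ : A)⁻¹ := by simp [mul_comm, mul_left_comm, mul_assoc]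
      rw [this] at h
      exact hdisj' _ hfa h
    · simp only [Set.mem_setOf_eq] at h
      have : (f ⟨a, ha⟩ : A)⁻¹ * ((a * (f ⟨a, ha⟩ : A)⁻¹) * a⁻¹)⁻¹ = 1 := by simp [mul_comm, mul_left_comm, mul_assoc]
      rw [this] at h
      exact h1 h
  · have hb : a * (f ⟨a, ha⟩ : A)⁻¹ ∈ P⁻¹ := by
      have := hf1 ⟨a, ha⟩
      simpa [mul_comm, mul_inv_rev] using this
    rw [hQN _ hb]
    intro h
    have : (a * (a * (f ⟨a, ha⟩ : A)⁻¹)⁻¹)⁻¹ = (f ⟨a, ha⟩ : A)⁻¹ := by simp [mul_comm, mul_left_comm, mul_assoc]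
    rw [Set.mem_inv, this] at h
    exact hdisj' _ hfa h
end

section
/- Let G be a group, H a normal subgroup, and p : G → A := G/H the quotient map. Suppose <_H is a locally invariant total ordering on H and ≺ is a locally invariant partial ordering on A. Fix a complete set S of coset representatives of H in G containing the identity. Define g₁ < g₂ iff either g₁⁻¹g₂ ∉ H and p(g₁) ≺ p(g₂), or g₁⁻¹g₂ ∈ H and s⁻¹g₁ <_H s⁻¹g₂ where s ∈ S with sH = g₁H. Then < is a locally invariant partial ordering on G. -/
/-- The lexicographic relation built from a locally invariant total ordering
on a normal subgroup `H` and a locally invariant partial ordering on `G/H` is a locally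
invariant partial ordering on `G`. -/
theorem stmt11 {G : Type*} [Group G] (H : Subgroup G) [H.Normal]
    (rH : G → G → Prop)
    (hHirr : ∀ g ∈ H, ¬ rH g g)
    (hHtrans : ∀ a ∈ H, ∀ b ∈ H, ∀ c ∈ H, rH a b → rH b c → rH a c)
    (hHtotal : ∀ a ∈ H, ∀ b ∈ H, a ≠ b → rH a b ∨ rH b a)
    (hHli : ∀ g ∈ H, ∀ h ∈ H, h ≠ 1 → rH g (h * g) ∨ rH g (h⁻¹ * g))
    (rA : G ⧸ H → G ⧸ H → Prop)
    (hAirr : ∀ x, ¬ rA x x)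
    (hAtrans : ∀ x y z, rA x y → rA y z → rA x z)
    (hAli : ∀ x y : G ⧸ H, y ≠ 1 → rA x (y * x) ∨ rA x (y⁻¹ * x))
    (S : Set G) (hS1 : (1 : G) ∈ S)
    (hS : ∀ g : G, ∃! s, s ∈ S ∧ (QuotientGroup.mk s : G ⧸ H) = QuotientGroup.mk g)
    (lt : G → G → Prop)
    (hlt : ∀ g₁ g₂ : G, lt g₁ g₂ ↔
      ((g₁⁻¹ * g₂ ∉ H ∧ rA (QuotientGroup.mk g₁) (QuotientGroup.mk g₂)) ∨
       (g₁⁻¹ * g₂ ∈ H ∧ ∃ s ∈ S, (QuotientGroup.mk s : G ⧸ H) = QuotientGroup.mk g₁ ∧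
          rH (s⁻¹ * g₁) (s⁻¹ * g₂)))) :
    (∀ g : G, ¬ lt g g) ∧
    (∀ a b c : G, lt a b → lt b c → lt a c) ∧
    (∀ g h : G, h ≠ 1 → lt g (h * g) ∨ lt g (h⁻¹ * g)) := by
  have memiff : ∀ a b : G, a⁻¹ * b ∈ H ↔ (QuotientGroup.mk a : G ⧸ H) = QuotientGroup.mk b := by
    intro a b
    exact (QuotientGroup.eq (s := H)).symm
  refine ⟨?_, ?_, ?_⟩
  · intro g hg
    rcases (hlt g g).1 hg with ⟨hn, _⟩ | ⟨_, s, hsS, hsg, hr⟩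
    · exact hn (by simpa using H.one_mem)
    · exact hHirr _ ((memiff s g).2 hsg) hr
  · intro a b c hab hbc
    rcases (hlt a b).1 hab with ⟨hab1, hab2⟩ | ⟨hab1, s, hsS, hsa, hr⟩ <;>
      rcases (hlt b c).1 hbc with ⟨hbc1, hbc2⟩ | ⟨hbc1, t, htS, htb, hr'⟩
    · refine (hlt a c).2 (Or.inl ⟨?_, hAtrans _ _ _ hab2 hbc2⟩)
      intro hmem
      have : (QuotientGroup.mk a : G ⧸ H) = QuotientGroup.mk c := (memiff a c).1 hmem
      exact hAirr _ (hAtrans _ _ _ hab2 (this ▸ hbc2))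
    · have hbc' : (QuotientGroup.mk b : G ⧸ H) = QuotientGroup.mk c := (memiff b c).1 hbc1
      refine (hlt a c).2 (Or.inl ⟨?_, hbc' ▸ hab2⟩)
      intro hmem
      have hac : (QuotientGroup.mk a : G ⧸ H) = QuotientGroup.mk c := (memiff a c).1 hmem
      exact hab1 ((memiff a b).2 (hac.trans hbc'.symm))
    · have hab' : (QuotientGroup.mk a : G ⧸ H) = QuotientGroup.mk b := (memiff a b).1 hab1
      refine (hlt a c).2 (Or.inl ⟨?_, hab' ▸ hbc2⟩)
      intro hmem
      have hac : (QuotientGroup.mk a : G ⧸ H) = QuotientGroup.mk c := (memiff a c).1 hmem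
      exact hbc1 ((memiff b c).2 (hab'.symm.trans hac))
    · have hab' : (QuotientGroup.mk a : G ⧸ H) = QuotientGroup.mk b := (memiff a b).1 hab1
      have hbc' : (QuotientGroup.mk b : G ⧸ H) = QuotientGroup.mk c := (memiff b c).1 hbc1
      have hst : t = s := by
        rcases hS a with ⟨u, _, hu⟩
        rw [hu t ⟨htS, htb.trans hab'.symm⟩, hu s ⟨hsS, hsa⟩]
      subst hst
      refine (hlt a c).2 (Or.inr ⟨(memiff a c).2 (hab'.trans hbc'), t, htS, hsa, ?_⟩)
      exact hHtrans _ ((memiff t a).2 hsa) _ ((memiff t b).2 (hsa.trans hab')) _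
        ((memiff t c).2 ((hsa.trans hab').trans hbc')) hr hr'
  · intro g h hne
    by_cases hH : h ∈ H
    · rcases hS g with ⟨s, ⟨hsS, hsg⟩, -⟩
      have hsgH : s⁻¹ * g ∈ H := (memiff s g).2 hsg
      have hh' : s⁻¹ * h * s ∈ H := Subgroup.Normal.conj_mem' ‹H.Normal› _ hH s
      have hh'ne : s⁻¹ * h * s ≠ 1 := by
        intro hc
        apply hne
        have : h * s = s := by
          have := congrArg (fun x => s * x) hc
          simpa [mul_assoc] using this
        simpa using mul_right_cancel (b := s) (by simpa using this)
      have hmemhg : g⁻¹ * (h * g) ∈ H := by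
        have := Subgroup.Normal.conj_mem' ‹H.Normal› _ hH g
        simpa [mul_assoc] using this
      have hmeminv : g⁻¹ * (h⁻¹ * g) ∈ H := by
        have := Subgroup.Normal.conj_mem' ‹H.Normal› _ (H.inv_mem hH) g
        simpa [mul_assoc] using this
      have hq : (QuotientGroup.mk h : G ⧸ H) = 1 := (QuotientGroup.eq_one_iff h).2 hH
      have hgh : (QuotientGroup.mk s : G ⧸ H) = QuotientGroup.mk (h * g) := by
        rw [QuotientGroup.mk_mul, hq, one_mul]; exact hsg
      rcases hHli (s⁻¹ * g) hsgH (s⁻¹ * h * s) hh' hh'ne with h1 | h1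
      · refine Or.inl ((hlt g (h * g)).2 (Or.inr ⟨hmemhg, s, hsS, hsg, ?_⟩))
        have : s⁻¹ * h * s * (s⁻¹ * g) = s⁻¹ * (h * g) := by group
        rwa [this] at h1
      · refine Or.inr ((hlt g (h⁻¹ * g)).2 (Or.inr ⟨hmeminv, s, hsS, hsg, ?_⟩))
        have : (s⁻¹ * h * s)⁻¹ * (s⁻¹ * g) = s⁻¹ * (h⁻¹ * g) := by group
        rwa [this] at h1
    · have hq : (QuotientGroup.mk h : G ⧸ H) ≠ 1 := by
        simpa [QuotientGroup.eq_one_iff] using hH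
      have hnm : ∀ k : G, k ∉ H → g⁻¹ * (k * g) ∉ H := by
        intro k hk hmem
        exact hk (by
          have := (Subgroup.Normal.conj_mem ‹H.Normal› _ hmem g)
          simpa [mul_assoc] using this)
      rcases hAli (QuotientGroup.mk g) (QuotientGroup.mk h) hq with h1 | h1
      · exact Or.inl ((hlt g (h * g)).2 (Or.inl ⟨hnm h hH, by simpa using h1⟩))
      · refine Or.inr ((hlt g (h⁻¹ * g)).2 (Or.inl ⟨hnm h⁻¹ (by simpa using hH), ?_⟩))
        simpa using h1
end

section
/- Let G be a group admitting a locally invariant ordering (equivalently, G is diffuse), and let R ⊆ G satisfy 1 ∉ R and |R ∩ {g, g⁻¹}| ≤ 1 for every g ∈ G. Then there exists a locally invariant partial ordering ≺ of G such that for all g ∈ G, g ≺ g⁻¹ if and only if g ∈ R. -/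
open Filter

/-- A diffuse group has no elements of order 2. -/
private lemma diffuse_sq_eq_one {G : Type*} [Group G]
    (hdiff : ∀ S : Finset G, S.Nonempty →
      ∃ a ∈ S, ∀ h : G, h ≠ 1 → h * a ∉ S ∨ h⁻¹ * a ∉ S)
    (a : G) (ha : a * a = 1) : a = 1 := by
  classical
  by_contra hne
  obtain ⟨b, hb, hext⟩ := hdiff ({1, a} : Finset G) ⟨1, by simp⟩
  have hainv : a⁻¹ = a := by rw [inv_eq_iff_mul_eq_one]; exact ha
  rcases Finset.mem_insert.mp hb with hb1 | hb2
  · rcases hext a hne with h | h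
    · exact h (by simp [hb1])
    · exact h (by simp [hb1, hainv])
  · have hb' : b = a := by simpa using hb2
    rcases hext a hne with h | h
    · exact h (by simp [hb', ha])
    · exact h (by simp [hb', hainv, ha])

/-- For every finite symmetric subset of a diffuse group there is an
inversion-invariant rank function which witnesses local invariance. -/
private lemma diffuse_exists_rk {G : Type*} [Group G]
    (hdiff : ∀ S : Finset G, S.Nonempty →
      ∃ a ∈ S, ∀ h : G, h ≠ 1 → h * a ∉ S ∨ h⁻¹ * a ∉ S) :
    ∀ S : Finset G, (∀ g ∈ S, g⁻¹ ∈ S) → ∃ rk : G → ℕ,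
      (∀ g : G, rk g⁻¹ = rk g) ∧
      (∀ g ∈ S, ∀ h : G, h ≠ 1 → h * g ∈ S → h⁻¹ * g ∈ S →
        rk g < rk (h * g) ∨ rk g < rk (h⁻¹ * g)) := by
  classical
  intro S
  induction S using Finset.strongInduction with
  | _ S ih =>
    intro hinv
    rcases S.eq_empty_or_nonempty with rfl | hne
    · exact ⟨fun _ => 0, fun _ => rfl, by simp⟩
    obtain ⟨a, haS, hext⟩ := hdiff S hne
    set S' : Finset G := (S.erase a).erase a⁻¹ with hS'
    have hmem : ∀ x : G, x ∈ S' ↔ x ∈ S ∧ ¬(x = a ∨ x = a⁻¹) := by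
      intro x
      simp only [hS', Finset.mem_erase]
      tauto
    have hsub : S' ⊂ S := by
      refine Finset.ssubset_iff_of_subset ?_ |>.mpr ⟨a, haS, ?_⟩
      · intro x hx; exact ((hmem x).mp hx).1
      · intro hx; exact ((hmem a).mp hx).2 (Or.inl rfl)
    have hinv' : ∀ g ∈ S', g⁻¹ ∈ S' := by
      intro g hg
      obtain ⟨hgS, hgne⟩ := (hmem g).mp hg
      refine (hmem g⁻¹).mpr ⟨hinv g hgS, ?_⟩
      rintro (h | h)
      · exact hgne (Or.inr (by rw [← h, inv_inv]))
      · exact hgne (Or.inl (inv_injective h))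
    obtain ⟨rk', h1, h2⟩ := ih S' hsub hinv'
    set N : ℕ := S'.sup rk' + 1 with hN
    refine ⟨fun g => if g = a ∨ g = a⁻¹ then N else rk' g, ?_, ?_⟩
    · intro g
      have hcond : (g⁻¹ = a ∨ g⁻¹ = a⁻¹) ↔ (g = a ∨ g = a⁻¹) := by
        constructor
        · rintro (h | h)
          · exact Or.inr (by rw [← h, inv_inv])
          · exact Or.inl (inv_inj.mp h)
        · rintro (h | h)
          · exact Or.inr (by rw [h])
          · exact Or.inl (by rw [h, inv_inv])
      exact if_congr hcond rfl (h1 g)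
    · intro g hg h hne' hg1 hg2
      by_cases hga : g = a ∨ g = a⁻¹
      · exfalso
        rcases hga with rfl | hga
        · rcases hext h hne' with hout | hout
          · exact hout hg1
          · exact hout hg2
        · -- g = a⁻¹ : use conjugated extremality of a
          have hga' : g = a⁻¹ := hga
          subst hga'
          have hne'' : a * h⁻¹ * a⁻¹ ≠ 1 := by
            intro hc
            apply hne'
            have : h⁻¹ = 1 := by
              have := hc
              rw [mul_assoc] at this
              have h2' : h⁻¹ * a⁻¹ = a⁻¹ := by
                have := mul_left_cancel (a := a) (b := h⁻¹ * a⁻¹) (c := a⁻¹)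
                  (by rw [this, mul_inv_cancel])
                exact this
              exact mul_right_cancel (b := a⁻¹) (by rw [h2', one_mul])
            rw [← inv_inv h, this, inv_one]
          rcases hext (a * h⁻¹ * a⁻¹) hne'' with hout | hout
          · apply hout
            have : a * h⁻¹ * a⁻¹ * a = (h * a⁻¹)⁻¹ := by group
            rw [this]
            exact hinv _ hg1
          · apply hout
            have : (a * h⁻¹ * a⁻¹)⁻¹ * a = (h⁻¹ * a⁻¹)⁻¹ := by group
            rw [this]
            exact hinv _ hg2
      · have hgS' : g ∈ S' := (hmem g).mpr ⟨hg, hga⟩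
        have hgle : rk' g < N := Nat.lt_succ_of_le (Finset.le_sup hgS')
        by_cases c1 : h * g = a ∨ h * g = a⁻¹
        · left
          simp only [if_pos c1, if_neg hga]
          exact hgle
        · by_cases c2 : h⁻¹ * g = a ∨ h⁻¹ * g = a⁻¹
          · right
            simp only [if_pos c2, if_neg hga]
            exact hgle
          · have hm1 : h * g ∈ S' := (hmem _).mpr ⟨hg1, c1⟩
            have hm2 : h⁻¹ * g ∈ S' := (hmem _).mpr ⟨hg2, c2⟩
            rcases h2 g hgS' h hne' hm1 hm2 with hlt | hlt
            · left; simpa only [if_neg hga, if_neg c1] using hlt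
            · right; simpa only [if_neg hga, if_neg c2] using hlt

/-- If `G` is diffuse and `R ⊆ G` with `1 ∉ R` and `|R ∩ {g,g⁻¹}| ≤ 1`
for all `g`, there is a locally invariant partial ordering `≺` with `g ≺ g⁻¹ ↔ g ∈ R`. -/
theorem stmt12 {G : Type*} [Group G]
    (hdiff : ∀ S : Finset G, S.Nonempty →
      ∃ a ∈ S, ∀ h : G, h ≠ 1 → h * a ∉ S ∨ h⁻¹ * a ∉ S)
    (R : Set G) (hR1 : (1 : G) ∉ R)
    (hR : ∀ g : G, (R ∩ {g, g⁻¹}).Subsingleton) :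
    ∃ r : G → G → Prop,
      (∀ g : G, ¬ r g g) ∧
      (∀ a b c : G, r a b → r b c → r a c) ∧
      (∀ g h : G, h ≠ 1 → r g (h * g) ∨ r g (h⁻¹ * g)) ∧
      (∀ g : G, r g g⁻¹ ↔ g ∈ R) := by
  classical
  -- symmetric closure of a finite set
  let C : Finset G → Finset G := fun S => S ∪ S.image (·⁻¹)
  have hCsub : ∀ S : Finset G, S ⊆ C S := fun S => Finset.subset_union_left
  have hCinv : ∀ S : Finset G, ∀ g ∈ C S, g⁻¹ ∈ C S := by
    intro S g hg
    rcases Finset.mem_union.mp hg with hg | hg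
    · exact Finset.mem_union_right _ (Finset.mem_image_of_mem _ hg)
    · obtain ⟨s, hs, rfl⟩ := Finset.mem_image.mp hg
      exact Finset.mem_union_left _ (by simpa using hs)
  choose rk hrk1 hrk2 using fun S : Finset G => diffuse_exists_rk hdiff (C S) (hCinv S)
  haveI : Nonempty (Finset G) := ⟨∅⟩
  let U : Ultrafilter (Finset G) := Ultrafilter.of atTop
  have hU : (U : Filter (Finset G)) ≤ (atTop : Filter (Finset G)) := Ultrafilter.of_le _
  set r : G → G → Prop :=
    fun a b => ({S : Finset G | rk S a < rk S b} ∈ (U : Filter (Finset G)))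
      ∨ (b = a⁻¹ ∧ a ∈ R) with hr
  have hne1 : ∀ a : G, a = a⁻¹ → a ∈ R → False := by
    intro a hai haR
    have ha1 : a = 1 := diffuse_sq_eq_one hdiff a (eq_inv_iff_mul_eq_one.mp hai)
    exact hR1 (ha1 ▸ haR)
  refine ⟨r, ?_, ?_, ?_, ?_⟩
  · -- irreflexive
    intro g
    rintro (hρ | ⟨hgi, hgR⟩)
    · obtain ⟨S, hS⟩ := Filter.nonempty_of_mem hρ
      simp only [Set.mem_setOf_eq] at hS
      exact lt_irrefl _ hS
    · exact hne1 g hgi hgR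
  · -- transitive
    rintro a b c (hab | ⟨rfl, haR⟩) (hbc | ⟨rfl, hbR⟩)
    · refine Or.inl (Filter.mem_of_superset (Filter.inter_mem hab hbc) (fun S hS => ?_))
      simp only [Set.mem_inter_iff, Set.mem_setOf_eq] at hS
      exact lt_trans hS.1 hS.2
    · refine Or.inl (Filter.mem_of_superset hab (fun S hS => ?_))
      show rk S a < rk S b⁻¹
      rw [hrk1 S b]
      exact hS
    · refine Or.inl (Filter.mem_of_superset hbc (fun S hS => ?_))
      show rk S a < rk S c
      rw [← hrk1 S a]
      exact hS
    · -- a ∈ R and a⁻¹ ∈ R : contradiction with subsingleton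
      exfalso
      have h1 : a ∈ R ∩ {a, a⁻¹} := ⟨haR, Set.mem_insert _ _⟩
      have h2 : a⁻¹ ∈ R ∩ {a, a⁻¹} := ⟨hbR, Set.mem_insert_iff.mpr (Or.inr rfl)⟩
      exact hne1 a (hR a h1 h2) haR
  · -- local invariance
    intro g h hne'
    have hT : {S : Finset G | ({g, h * g, h⁻¹ * g} : Finset G) ≤ S}
        ∈ (U : Filter (Finset G)) := Filter.le_def.mp hU _ (Filter.mem_atTop _)
    have hsub : {S : Finset G | ({g, h * g, h⁻¹ * g} : Finset G) ≤ S} ⊆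
        {S : Finset G | rk S g < rk S (h * g)} ∪ {S : Finset G | rk S g < rk S (h⁻¹ * g)} := by
      intro S hS
      have hle : ({g, h * g, h⁻¹ * g} : Finset G) ⊆ S := hS
      have hgm : g ∈ C S := hCsub S (hle (by simp))
      have hg1 : h * g ∈ C S := hCsub S (hle (by simp))
      have hg2 : h⁻¹ * g ∈ C S := hCsub S (hle (by simp))
      rcases hrk2 S g hgm h hne' hg1 hg2 with hlt | hlt
      · exact Or.inl hlt
      · exact Or.inr hlt
    have := Filter.mem_of_superset hT hsub
    rcases (Ultrafilter.union_mem_iff (f := U)).mp this with hm | hm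
    · exact Or.inl (Or.inl hm)
    · exact Or.inr (Or.inl hm)
  · -- pair condition
    intro g
    constructor
    · rintro (hρ | ⟨_, hgR⟩)
      · obtain ⟨S, hS⟩ := Filter.nonempty_of_mem hρ
        simp only [Set.mem_setOf_eq] at hS
        have : rk S g⁻¹ = rk S g := hrk1 S g
        rw [this] at hS
        exact absurd hS (lt_irrefl _)
      · exact hgR
    · intro hg
      exact Or.inr ⟨rfl, hg⟩
end

section
/- If a nontrivial group G admits a locally invariant partial ordering, then G admits uncountably many locally invariant partial orderings (i.e., the set of locally invariant partial orderings of G is uncountable). -/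
/-!
Szpilrajn's theorem extends a locally invariant order to a total one `t`, and local invariance
forbids torsion: a maximal element of a finite subgroup `H` could be moved up by some `h ∈ H`.
Comparing `x` and `y` through the `t`-maxima of `{x, x⁻¹}` and `{y, y⁻¹}` gives a locally invariant
order in which no `x` lies below `x⁻¹`; to it one may add the relations `x ≺ x⁻¹` for `x` in any
set `R` disjoint from `R⁻¹`. For `g ≠ 1` the positive powers of `g` form an infinite such set,
and its subsets give uncountably many different orders.
-/

structure IsLocallyInvariantOrder {G : Type*} [Group G] (r : G → G → Prop) : Prop
    extends IsStrictOrder G r where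
  locInv : ∀ g h : G, h ≠ 1 → r g (h * g) ∨ r g (h⁻¹ * g)

theorem isLocallyInvariantOrder_iff {G : Type*} [Group G] {r : G → G → Prop} :
    IsLocallyInvariantOrder r ↔
    (∀ g : G, ¬ r g g) ∧ (∀ a b c : G, r a b → r b c → r a c) ∧
      (∀ g h : G, h ≠ 1 → r g (h * g) ∨ r g (h⁻¹ * g)) :=
  ⟨fun hr => ⟨hr.irrefl, hr.trans, hr.locInv⟩,
    fun ⟨hirr, htr, hli⟩ => { irrefl := hirr, trans := htr, locInv := hli }⟩

namespace IsLocallyInvariantOrder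

variable {G : Type*} [Group G] {r : G → G → Prop}

theorem mono {s : G → G → Prop} (hr : IsLocallyInvariantOrder r) [IsStrictOrder G s]
    (hrs : r ≤ s) : IsLocallyInvariantOrder s :=
  ⟨inferInstance, fun g h hh => (hr.locInv g h hh).imp (hrs _ _) (hrs _ _)⟩

theorem exists_isStrictTotalOrder (hr : IsLocallyInvariantOrder r) :
    ∃ t, IsLocallyInvariantOrder t ∧ IsStrictTotalOrder G t := by
  have := hr.toIsStrictOrder
  let := partialOrderOfSO r
  let f : G → LinearExtension G := toLinearExtension
  have hf : StrictMono f := toLinearExtension.monotone.strictMono_of_injective fun _ _ => id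
  have : IsStrictTotalOrder G (fun x y => f x < f y) :=
    { trichotomous := fun x y hxy hyx => (not_lt.1 hyx).antisymm (not_lt.1 hxy)
      irrefl := fun x => lt_irrefl (f x)
      trans := fun _ _ _ => lt_trans }
  exact ⟨_, hr.mono fun _ _ hxy => hf hxy, this⟩

theorem subgroup_eq_bot_of_finite (hr : IsLocallyInvariantOrder r) (H : Subgroup G)
    (hH : (H : Set G).Finite) : H = ⊥ := by
  have := hr.toIsStrictOrder
  obtain ⟨⟨m, hm⟩, -, hmax⟩ :=
    (hH.wellFoundedOn (r := Function.swap r)).has_min Set.univ ⟨⟨1, H.one_mem⟩, trivial⟩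
  refine H.eq_bot_iff_forall.mpr fun h hh => by_contra fun hne => ?_
  rcases hr.locInv m h hne with hlt | hlt
  · exact hmax ⟨_, H.mul_mem hh hm⟩ trivial hlt
  · exact hmax ⟨_, H.mul_mem (H.inv_mem hh) hm⟩ trivial hlt

theorem not_isOfFinOrder (hr : IsLocallyInvariantOrder r) {g : G} (hg : g ≠ 1) :
    ¬ IsOfFinOrder g := fun hfin =>
  hg <| Subgroup.mem_bot.mp <|
    hr.subgroup_eq_bot_of_finite _ hfin.finite_zpowers ▸ Subgroup.mem_zpowers g

end IsLocallyInvariantOrder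

section AbsRel

variable {G : Type*} [Group G] {t : G → G → Prop} {x y : G}

/-- For a strict total order `t`, `absRel t x y` says `max x x⁻¹ < max y y⁻¹` with respect to `t`. -/
def absRel (t : G → G → Prop) (x y : G) : Prop :=
  (t x y ∨ t x y⁻¹) ∧ (t x⁻¹ y ∨ t x⁻¹ y⁻¹)

theorem absRel_inv_left : absRel t x⁻¹ y ↔ absRel t x y := by
  rw [absRel, absRel, inv_inv, and_comm]

theorem absRel_inv_right : absRel t x y⁻¹ ↔ absRel t x y := by
  simp only [absRel, inv_inv, or_comm]

instance [IsStrictOrder G t] : IsStrictOrder G (absRel t) where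
  irrefl x h :=
    h.1.elim (irrefl x) fun h₁ => h.2.elim (fun h₂ => irrefl x (_root_.trans h₁ h₂)) (irrefl _)
  trans x y z hxy hyz := by
    have key : ∀ a, t a y ∨ t a y⁻¹ → t a z ∨ t a z⁻¹ := fun a ha => ha.elim
      (fun h => hyz.1.imp (_root_.trans h) (_root_.trans h))
      (fun h => hyz.2.imp (_root_.trans h) (_root_.trans h))
    exact ⟨key x hxy.1, key x⁻¹ hxy.2⟩

theorem not_absRel_inv_self [IsStrictOrder G t] : ¬ absRel t x x⁻¹ :=
  fun h => irrefl (r := absRel t) x (absRel_inv_right.mp h)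

theorem absRel_or_absRel_of_lt [IsStrictTotalOrder G t] {u v : G} (hu : t x u) (hv : t x⁻¹ v⁻¹) :
    absRel t x u ∨ absRel t x v := by
  by_contra! h
  have h₁ : t x x⁻¹ := trans_trichotomous_right hu fun h' => h.1 ⟨Or.inl hu, Or.inl h'⟩
  have h₂ : t x⁻¹ x := trans_trichotomous_right hv fun h' => h.2 ⟨Or.inr h', Or.inr hv⟩
  exact irrefl x (_root_.trans h₁ h₂)

theorem isLocallyInvariantOrder_absRel [IsStrictTotalOrder G t] (ht : IsLocallyInvariantOrder t) :
    IsLocallyInvariantOrder (absRel t) := by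
  refine { toIsStrictOrder := inferInstance, locInv := fun x k hk => ?_ }
  have hconj : x⁻¹ * k * x ≠ 1 := by simpa [mul_assoc, inv_mul_eq_one] using hk
  have h₁ := ht.locInv x k hk
  -- local invariance at `x⁻¹`, applied to the conjugate of `k` by `x`
  have h₂ : t x⁻¹ (k⁻¹ * x)⁻¹ ∨ t x⁻¹ (k * x)⁻¹ := by
    simpa [mul_assoc] using ht.locInv x⁻¹ (x⁻¹ * k * x) hconj
  rcases h₁ with h₁ | h₁ <;> rcases h₂ with h₂ | h₂ <;>
    rcases absRel_or_absRel_of_lt h₁ h₂ with h | h <;> simp only [h, true_or, or_true]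

end AbsRel

section AbsRelWith

variable {G : Type*} [Group G] {t : G → G → Prop} {R : Set G}

def absRelWith (t : G → G → Prop) (R : Set G) (x y : G) : Prop :=
  absRel t x y ∨ (x ∈ R ∧ y = x⁻¹)

theorem absRelWith_inv_self_iff [IsStrictOrder G t] {x : G} : absRelWith t R x x⁻¹ ↔ x ∈ R := by
  simp [absRelWith, not_absRel_inv_self]

theorem isLocallyInvariantOrder_absRelWith [IsStrictTotalOrder G t]
    (ht : IsLocallyInvariantOrder t) (hR : ∀ x ∈ R, x⁻¹ ∉ R) :
    IsLocallyInvariantOrder (absRelWith t R) where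
  irrefl x := by
    rintro (h | ⟨hx, hxx⟩)
    · exact irrefl (r := absRel t) x h
    · exact hR x hx (hxx ▸ hx)
  trans := by
    rintro x y z (hxy | ⟨hx, rfl⟩) (hyz | ⟨hy, rfl⟩)
    · exact Or.inl (_root_.trans hxy hyz)
    · exact Or.inl (absRel_inv_right.mpr hxy)
    · exact Or.inl (absRel_inv_left.mp hyz)
    · exact (hR x hx hy).elim
  locInv x k hk := ((isLocallyInvariantOrder_absRel ht).locInv x k hk).imp Or.inl Or.inl

theorem IsLocallyInvariantOrder.exists_inv_iff {r : G → G → Prop} (hr : IsLocallyInvariantOrder r)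
    (hR : ∀ x ∈ R, x⁻¹ ∉ R) :
    ∃ s, IsLocallyInvariantOrder s ∧ ∀ x, s x x⁻¹ ↔ x ∈ R := by
  obtain ⟨t, ht, _⟩ := hr.exists_isStrictTotalOrder
  exact ⟨_, isLocallyInvariantOrder_absRelWith ht hR, fun _ => absRelWith_inv_self_iff⟩

end AbsRelWith

theorem pow_succ_inv_ne_pow_succ {G : Type*} [Group G] {g : G} (hg : ¬ IsOfFinOrder g) (m n : ℕ) :
    (g ^ (m + 1))⁻¹ ≠ g ^ (n + 1) := fun h =>
  hg <| isOfFinOrder_iff_pow_eq_one.mpr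
    ⟨m + 1 + (n + 1), by omega, by rw [pow_add, ← h, mul_inv_cancel]⟩

theorem Set.Infinite.not_countable_powerset {α : Type*} {s : Set α} (hs : s.Infinite) :
    ¬ (𝒫 s).Countable := by
  intro hc
  have h := Cardinal.le_aleph0_iff_set_countable.mpr hc
  rw [Cardinal.mk_powerset] at h
  exact (Cardinal.cantor _).not_ge
    ((Cardinal.power_le_power_left two_ne_zero (Cardinal.infinite_iff.mp hs.to_subtype)).trans h)

/-- If a nontrivial group admits a locally invariant partial ordering,
it admits uncountably many. -/
theorem stmt14 {G : Type*} [Group G] [Nontrivial G]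
    (h : ∃ r : G → G → Prop,
      (∀ g : G, ¬ r g g) ∧
      (∀ a b c : G, r a b → r b c → r a c) ∧
      (∀ g h : G, h ≠ 1 → r g (h * g) ∨ r g (h⁻¹ * g))) :
    ¬ Set.Countable { r : G → G → Prop |
      (∀ g : G, ¬ r g g) ∧
      (∀ a b c : G, r a b → r b c → r a c) ∧
      (∀ g h : G, h ≠ 1 → r g (h * g) ∨ r g (h⁻¹ * g)) } := by
  obtain ⟨r, hr⟩ := h
  rw [← isLocallyInvariantOrder_iff] at hr
  obtain ⟨g, hg⟩ := exists_ne (1 : G)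
  have hg_inf := hr.not_isOfFinOrder hg
  let P := Set.range fun n : ℕ => g ^ (n + 1)
  have hP : P.Infinite := Set.infinite_range_of_injective
    ((injective_pow_iff_not_isOfFinOrder.mpr hg_inf).comp Nat.succ_injective)
  refine fun hcount => hP.not_countable_powerset <|
    (hcount.image fun s => {x | s x x⁻¹}).mono fun R hRP => ?_
  obtain ⟨s, hs, hsR⟩ := hr.exists_inv_iff (R := R) fun x hx hx' => by
    obtain ⟨m, rfl⟩ := hRP hx
    obtain ⟨n, hn⟩ := hRP hx'
    exact pow_succ_inv_ne_pow_succ hg_inf m n hn.symm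
  exact ⟨s, isLocallyInvariantOrder_iff.mp hs, Set.ext hsR⟩
end

section
/- Every group admitting a locally invariant partial ordering is torsion-free. -/
private lemma stmt16_aux {G : Type*} [Group G] {r : G → G → Prop}
    (hirr : ∀ g : G, ¬ r g g)
    (htr : ∀ a b c : G, r a b → r b c → r a c)
    (hloc : ∀ g h : G, h ≠ 1 → r g (h * g) ∨ r g (h⁻¹ * g))
    {g : G} (hg : g ≠ 1) (h1 : r 1 g) : ∀ n : ℕ, 0 < n → g ^ n ≠ 1 := by
  have step : ∀ k : ℕ, r (g ^ k) (g ^ (k + 1)) := by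
    intro k
    induction k with
    | zero => simpa using h1
    | succ k ih =>
      rcases hloc (g ^ (k + 1)) g hg with h' | h'
      · rw [← pow_succ'] at h'
        exact h'
      · exfalso
        apply hirr (g ^ (k + 1))
        apply htr _ _ _ h'
        have : g⁻¹ * g ^ (k + 1) = g ^ k := by
          rw [pow_succ']; group
        rwa [this]
  have chain : ∀ n : ℕ, 0 < n → r 1 (g ^ n) := by
    intro n hn
    induction n with
    | zero => omega
    | succ n ih =>
      rcases Nat.eq_zero_or_pos n with rfl | hn'
      · simpa using h1
      · exact htr _ _ _ (ih hn') (step n)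
  intro n hn hgn
  have := chain n hn
  rw [hgn] at this
  exact hirr 1 this

/-- A group admitting a locally invariant partial ordering is torsion-free. -/
theorem stmt16 {G : Type*} [Group G]
    (h : ∃ r : G → G → Prop,
      (∀ g : G, ¬ r g g) ∧
      (∀ a b c : G, r a b → r b c → r a c) ∧
      (∀ g h : G, h ≠ 1 → r g (h * g) ∨ r g (h⁻¹ * g))) :
    ∀ g : G, g ≠ 1 → ∀ n : ℕ, 0 < n → g ^ n ≠ 1 := by
  obtain ⟨r, hirr, htr, hloc⟩ := h
  intro g hg n hn hgn
  rcases hloc 1 g hg with h1 | h1 <;> rw [mul_one] at h1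
  · exact stmt16_aux hirr htr hloc hg h1 n hn hgn
  · have hg' : g⁻¹ ≠ 1 := by simpa using hg
    refine stmt16_aux hirr htr hloc hg' h1 n hn ?_
    rw [inv_pow, hgn, inv_one]
end

section
/- Let G be a group and let a finite symmetric subset S ⊆ G (i.e., g ∈ S iff g⁻¹ ∈ S) be given, with G diffuse and torsion-free. Let R ⊆ G satisfy 1 ∉ R and |R ∩ {g,g⁻¹}| ≤ 1 for all g. Then there is a strict partial order ≺ on S such that: (i) if h ≠ 1 and g, hg, h⁻¹g ∈ S, then g ≺ hg or g ≺ h⁻¹g; and (ii) for g ∈ S with g⁻¹ ∈ S, g ≺ g⁻¹ iff g ∈ R. -/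
/-- For a diffuse torsion-free group `G`, a finite symmetric `S ⊆ G`, and
`R` with `1 ∉ R`, `|R ∩ {g,g⁻¹}| ≤ 1`, there is a strict partial order on `S` with the
local invariance property (i) and `g ≺ g⁻¹ ↔ g ∈ R` (ii). -/
theorem stmt17 {G : Type*} [Group G]
    (hdiff : ∀ T : Finset G, T.Nonempty →
      ∃ a ∈ T, ∀ h : G, h ≠ 1 → h * a ∉ T ∨ h⁻¹ * a ∉ T)
    (htf : ∀ g : G, g ≠ 1 → ∀ n : ℕ, 0 < n → g ^ n ≠ 1)
    (S : Finset G) (hsym : ∀ g : G, g ∈ S ↔ g⁻¹ ∈ S)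
    (R : Set G) (hR1 : (1 : G) ∉ R)
    (hR : ∀ g : G, (R ∩ {g, g⁻¹}).Subsingleton) :
    ∃ r : G → G → Prop,
      (∀ g ∈ S, ¬ r g g) ∧
      (∀ a ∈ S, ∀ b ∈ S, ∀ c ∈ S, r a b → r b c → r a c) ∧
      (∀ g h : G, h ≠ 1 → g ∈ S → h * g ∈ S → h⁻¹ * g ∈ S →
        r g (h * g) ∨ r g (h⁻¹ * g)) ∧
      (∀ g ∈ S, g⁻¹ ∈ S → (r g g⁻¹ ↔ g ∈ R)) := by
  classical
  -- an element equal to its inverse is trivial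
  have sq1 : ∀ x : G, x = x⁻¹ → x = 1 := by
    intro x hx
    by_contra hne
    refine htf x hne 2 (by norm_num) ?_
    rw [sq]
    nth_rewrite 2 [hx]
    simp
  -- Step 1 : in a symmetric finite set, some element and its inverse are both extreme.
  have key : ∀ T : Finset G, (∀ g ∈ T, g⁻¹ ∈ T) → T.Nonempty →
      ∃ b ∈ T, (∀ h : G, h ≠ 1 → h * b ∉ T ∨ h⁻¹ * b ∉ T) ∧
        (∀ h : G, h ≠ 1 → h * b⁻¹ ∉ T ∨ h⁻¹ * b⁻¹ ∉ T) := by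
    intro T hsymT hne
    obtain ⟨t, ht⟩ := hne
    set W : Finset G := (T ×ˢ T ×ˢ T).image
      (fun p : G × G × G => p.1 * p.2.1 * p.2.2) with hW
    have memW : ∀ x ∈ T, ∀ y ∈ T, ∀ z ∈ T, x * y * z ∈ W := by
      intro x hx y hy z hz
      exact Finset.mem_image.2 ⟨⟨x, y, z⟩, by simp [Finset.mem_product, hx, hy, hz], rfl⟩
    have hWne : W.Nonempty := ⟨t * t * t, memW t ht t ht t ht⟩
    obtain ⟨c, hcW, hc⟩ := hdiff W hWne
    obtain ⟨p, hp, hpc⟩ := Finset.mem_image.1 hcW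
    obtain ⟨a, b, d⟩ := p
    simp only [Finset.mem_product] at hp
    obtain ⟨ha, hb, hd⟩ := hp
    simp only at hpc
    refine ⟨b, hb, ?_, ?_⟩
    · intro h hh
      by_contra hcon
      push_neg at hcon
      obtain ⟨m1, m2⟩ := hcon
      have hk : a * h * a⁻¹ ≠ 1 := by
        intro e
        apply hh
        have h2 : h = a⁻¹ * (a * h * a⁻¹) * a := by group
        rw [e] at h2
        simpa using h2
      rcases hc _ hk with hm | hm
      · refine hm ?_
        have e1 : a * h * a⁻¹ * c = a * (h * b) * d := by rw [← hpc]; group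
        rw [e1]; exact memW _ ha _ m1 _ hd
      · refine hm ?_
        have e1 : (a * h * a⁻¹)⁻¹ * c = a * (h⁻¹ * b) * d := by rw [← hpc]; group
        rw [e1]; exact memW _ ha _ m2 _ hd
    · intro h hh
      by_contra hcon
      push_neg at hcon
      obtain ⟨m1, m2⟩ := hcon
      have m1' : b * h⁻¹ ∈ T := by
        have := hsymT _ m1
        simpa [mul_inv_rev] using this
      have m2' : b * h ∈ T := by
        have := hsymT _ m2
        simpa [mul_inv_rev] using this
      have hk : a * b * h * b⁻¹ * a⁻¹ ≠ 1 := by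
        intro e
        apply hh
        have h2 : h = b⁻¹ * a⁻¹ * (a * b * h * b⁻¹ * a⁻¹) * a * b := by group
        rw [e] at h2
        simpa using h2
      rcases hc _ hk with hm | hm
      · refine hm ?_
        have e1 : a * b * h * b⁻¹ * a⁻¹ * c = a * (b * h) * d := by rw [← hpc]; group
        rw [e1]; exact memW _ ha _ m2' _ hd
      · refine hm ?_
        have e1 : (a * b * h * b⁻¹ * a⁻¹)⁻¹ * c = a * (b * h⁻¹) * d := by rw [← hpc]; group
        rw [e1]; exact memW _ ha _ m1' _ hd
  -- Step 2 : build a pair-symmetric rank function by induction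
  have build : ∀ n : ℕ, ∀ T : Finset G, T.card ≤ n → (∀ g ∈ T, g⁻¹ ∈ T) →
      ∃ f : G → ℕ, (∀ x ∈ T, f x⁻¹ = f x) ∧ (∀ x ∈ T, f x ≤ T.card) ∧
        (∀ x ∈ T, ∀ h : G, h ≠ 1 → h * x ∈ T → h⁻¹ * x ∈ T →
          f x < f (h * x) ∨ f x < f (h⁻¹ * x)) := by
    intro n
    induction n with
    | zero =>
      intro T hcard _
      have hT : T = ∅ := Finset.card_eq_zero.1 (Nat.le_zero.1 hcard)
      subst hT
      exact ⟨fun _ => 0, by simp, by simp, by simp⟩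
    | succ n ih =>
      intro T hcard hsymT
      rcases T.eq_empty_or_nonempty with rfl | hne
      · exact ⟨fun _ => 0, by simp, by simp, by simp⟩
      obtain ⟨b, hbT, hb1, hb2⟩ := key T hsymT hne
      set T' : Finset G := (T.erase b).erase b⁻¹ with hT'
      have hsub : T' ⊆ T := (Finset.erase_subset _ _).trans (Finset.erase_subset _ _)
      have hmemT' : ∀ x : G, x ∈ T' ↔ x ∈ T ∧ x ≠ b ∧ x ≠ b⁻¹ := by
        intro x
        simp only [hT', Finset.mem_erase]
        tauto
      have hsymT' : ∀ g ∈ T', g⁻¹ ∈ T' := by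
        intro g hg
        rw [hmemT'] at hg ⊢
        obtain ⟨hgT, hgb, hgbi⟩ := hg
        refine ⟨hsymT g hgT, ?_, ?_⟩
        · intro e
          exact hgbi (by rw [← e, inv_inv])
        · intro e
          apply hgb
          have := congrArg (fun z : G => z⁻¹) e
          simpa using this
      have hcardlt : T'.card < T.card := by
        have h1 : (T.erase b).card = T.card - 1 := Finset.card_erase_of_mem hbT
        have h2 : T'.card ≤ (T.erase b).card := Finset.card_erase_le
        have h3 : 0 < T.card := Finset.card_pos.2 hne
        omega
      have hcard' : T'.card ≤ n := by omega
      obtain ⟨f', hA, hB, hC⟩ := ih T' hcard' hsymT'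
      refine ⟨fun x => if x = b ∨ x = b⁻¹ then T.card else f' x, ?_, ?_, ?_⟩
      · intro x hx
        by_cases hx1 : x = b ∨ x = b⁻¹
        · rcases hx1 with rfl | rfl
          · simp
          · simp
        · push_neg at hx1
          have hxT' : x ∈ T' := (hmemT' x).2 ⟨hx, hx1.1, hx1.2⟩
          have hxiT' : x⁻¹ ∈ T' := hsymT' x hxT'
          have c2 : ¬(x⁻¹ = b ∨ x⁻¹ = b⁻¹) := by
            rw [hmemT'] at hxiT'
            tauto
          have c1 : ¬(x = b ∨ x = b⁻¹) := not_or.2 hx1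
          simp only [if_neg c1, if_neg c2]
          exact hA x hxT'
      · intro x hx
        beta_reduce
        by_cases hx1 : x = b ∨ x = b⁻¹
        · rw [if_pos hx1]
        · rw [if_neg hx1]
          push_neg at hx1
          have hxT' : x ∈ T' := (hmemT' x).2 ⟨hx, hx1.1, hx1.2⟩
          exact (hB x hxT').trans (le_of_lt hcardlt)
      · intro x hx h hh hm1 hm2
        beta_reduce
        by_cases hx1 : x = b ∨ x = b⁻¹
        · exfalso
          rcases hx1 with rfl | rfl
          · rcases hb1 h hh with hm | hm
            · exact hm hm1
            · exact hm hm2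
          · rcases hb2 h hh with hm | hm
            · exact hm hm1
            · exact hm hm2
        · push_neg at hx1
          have hxT' : x ∈ T' := (hmemT' x).2 ⟨hx, hx1.1, hx1.2⟩
          have fx : (if x = b ∨ x = b⁻¹ then T.card else f' x) = f' x :=
            if_neg (not_or.2 hx1)
          have fxlt : f' x < T.card := lt_of_le_of_lt (hB x hxT') hcardlt
          by_cases hy1 : h * x = b ∨ h * x = b⁻¹
          · left
            rw [fx, if_pos hy1]
            exact fxlt
          · by_cases hy2 : h⁻¹ * x = b ∨ h⁻¹ * x = b⁻¹
            · right
              rw [fx, if_pos hy2]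
              exact fxlt
            · push_neg at hy1
              push_neg at hy2
              have hyT' : h * x ∈ T' := (hmemT' _).2 ⟨hm1, hy1.1, hy1.2⟩
              have hy'T' : h⁻¹ * x ∈ T' := (hmemT' _).2 ⟨hm2, hy2.1, hy2.2⟩
              rcases hC x hxT' h hh hyT' hy'T' with hlt | hlt
              · left
                rw [fx, if_neg (not_or.2 hy1)]
                exact hlt
              · right
                rw [fx, if_neg (not_or.2 hy2)]
                exact hlt
  -- Step 3 : conclude
  obtain ⟨f, hA, hB, hC⟩ := build S.card S le_rfl (fun g hg => (hsym g).1 hg)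
  refine ⟨fun x y => f x < f y ∨ (y = x⁻¹ ∧ x ∈ R), ?_, ?_, ?_, ?_⟩
  · rintro g hg (hlt | ⟨he, hgR⟩)
    · exact lt_irrefl _ hlt
    · exact hR1 ((sq1 g he) ▸ hgR)
  · intro a ha b hb c hc hab hbc
    rcases hab with hlt1 | ⟨hba, haR⟩
    · rcases hbc with hlt2 | ⟨hcb, hbR⟩
      · exact Or.inl (lt_trans hlt1 hlt2)
      · exact Or.inl (by rw [hcb, hA b hb]; exact hlt1)
    · rcases hbc with hlt2 | ⟨hcb, hbR⟩
      · rw [hba, hA a ha] at hlt2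
        exact Or.inl hlt2
      · exfalso
        have h1 : a ∈ R ∩ ({a, a⁻¹} : Set G) := ⟨haR, Or.inl rfl⟩
        have h2 : a⁻¹ ∈ R ∩ ({a, a⁻¹} : Set G) := ⟨hba ▸ hbR, Or.inr rfl⟩
        have hai : a = a⁻¹ := hR a h1 h2
        exact hR1 ((sq1 a hai) ▸ haR)
  · intro g h hh hg hg1 hg2
    rcases hC g hg h hh hg1 hg2 with hlt | hlt
    · exact Or.inl (Or.inl hlt)
    · exact Or.inr (Or.inl hlt)
  · intro g hg hgi
    constructor
    · rintro (hlt | ⟨_, hgR⟩)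
      · rw [hA g hg] at hlt
        exact absurd hlt (lt_irrefl _)
      · exact hgR
    · intro hgR
      exact Or.inr ⟨rfl, hgR⟩
end

section
/- Let G be a group. The map sending each pair ((g,h), (P_f)_{f∈G}) to the family (h⁻¹·P_{h·f·g⁻¹}·h)_{f∈G} defines an action of G × G on the set of equivariant fields of cones of G; that is, if (P_f)_{f∈G} is an equivariant field of cones, then so is (h⁻¹·P_{h·f·g⁻¹}·h)_{f∈G}, and the action axioms hold. -/
lemma mem_act_aux {G : Type*} [Group G]
    (act : G × G → (G → Set G) → (G → Set G))
    (hact : ∀ (p : G × G) (Q : G → Set G) (f : G),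
      act p Q f = (fun x => p.2⁻¹ * x * p.2) '' Q (p.2 * f * p.1⁻¹))
    (p : G × G) (Q : G → Set G) (f x : G) :
    x ∈ act p Q f ↔ p.2 * x * p.2⁻¹ ∈ Q (p.2 * f * p.1⁻¹) := by
  rw [hact]
  constructor
  · rintro ⟨a, ha, rfl⟩
    have : p.2 * (p.2⁻¹ * a * p.2) * p.2⁻¹ = a := by group
    rwa [this]
  · intro h
    exact ⟨p.2 * x * p.2⁻¹, h, by group⟩

/-- The formula `((g,h), (P_f)) ↦ (h⁻¹ P_{h f g⁻¹} h)` preserves the set of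
equivariant fields of cones, and satisfies the action axioms (identity and compatibility). -/
theorem stmt19 {G : Type*} [Group G]
    (act : G × G → (G → Set G) → (G → Set G))
    (hact : ∀ (p : G × G) (Q : G → Set G) (f : G),
      act p Q f = (fun x => p.2⁻¹ * x * p.2) '' Q (p.2 * f * p.1⁻¹)) :
    (∀ (p : G × G) (Q : G → Set G),
      ((∀ f : G, Q f ∪ (Q f)⁻¹ = {(1 : G)}ᶜ) ∧
       (∀ f g h : G, g ∈ Q f → h ∈ Q (g * f) → h * g ∈ Q f)) →
      ((∀ f : G, act p Q f ∪ (act p Q f)⁻¹ = {(1 : G)}ᶜ) ∧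
       (∀ f g h : G, g ∈ act p Q f → h ∈ act p Q (g * f) → h * g ∈ act p Q f))) ∧
    (∀ Q : G → Set G, act 1 Q = Q) ∧
    (∀ (x y : G × G) (Q : G → Set G), act x (act y Q) = act (y * x) Q) := by
  have mem := mem_act_aux act hact
  refine ⟨?_, ?_, ?_⟩
  · rintro p Q ⟨hQ1, hQ2⟩
    constructor
    · intro f
      ext x
      have h1 : ∀ y, y ∈ Q (p.2 * f * p.1⁻¹) ∪ (Q (p.2 * f * p.1⁻¹))⁻¹ ↔ y ≠ 1 := by
        intro y; rw [hQ1]; simp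
      simp only [Set.mem_union, Set.mem_inv, mem, Set.mem_compl_iff, Set.mem_singleton_iff]
      have : p.2 * x⁻¹ * p.2⁻¹ = (p.2 * x * p.2⁻¹)⁻¹ := by group
      rw [this]
      have := h1 (p.2 * x * p.2⁻¹)
      simp only [Set.mem_union, Set.mem_inv] at this
      rw [this]
      constructor
      · intro h he; rw [he] at h; simp at h
      · intro h he
        apply h
        have : x = p.2⁻¹ * (p.2 * x * p.2⁻¹) * p.2 := by group
        rw [this, he]; group
    · intro f g h hg hh
      rw [mem] at hg hh ⊢
      have key : p.2 * (g * f) * p.1⁻¹ = (p.2 * g * p.2⁻¹) * (p.2 * f * p.1⁻¹) := by group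
      rw [key] at hh
      have := hQ2 _ _ _ hg hh
      have e : p.2 * (h * g) * p.2⁻¹ = (p.2 * h * p.2⁻¹) * (p.2 * g * p.2⁻¹) := by group
      rwa [e]
  · intro Q
    funext f
    ext x
    rw [mem]
    simp
  · intro x y Q
    funext f
    ext z
    rw [mem, mem, mem]
    have : (y * x).2 * z * (y * x).2⁻¹ = y.2 * (x.2 * z * x.2⁻¹) * y.2⁻¹ := by
      simp [Prod.mul_def]; group
    rw [this]
    have : (y * x).2 * f * (y * x).1⁻¹ = y.2 * (x.2 * f * x.1⁻¹) * y.1⁻¹ := by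
      simp [Prod.mul_def]; group
    rw [this]
end
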